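/- arXiv:2602.17285 — 3 statements merged into one kernel-verified Lean document; each statement's English description precedes it below -/
import Mathlib

section
/- Let Y be a Banach space, 1 < p < ∞ and α ∈ (0,1] with αp < 1. Then there exists a constant C > 0, depending only on p and α, such that for every n ∈ ℕ and every x ∈ L^p([0,1];Y) with ‖x‖_{W^α_p([0,1];Y)} < ∞ one has ‖𝔥ⁿ_s(x) − x‖_{L^p([0,1];Y)} ≤ C · 2^{−nα} · ‖x‖_{W^α_p([0,1];Y)}. -/
open MeasureTheory Set Filter
open scoped ENNReal NNReal

/-- The shifted Haar projection `𝔥ⁿ_s`: the step function which vanishes on `[0, 2⁻ⁿ]` and,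
for each `j = 1, …, 2ⁿ - 1`, equals on `(j·2⁻ⁿ, (j+1)·2⁻ⁿ]` the mean value of `x` over the
preceding dyadic interval `((j-1)·2⁻ⁿ, j·2⁻ⁿ]`. -/
noncomputable def shiftedHaar {Y : Type*} [NormedAddCommGroup Y] [NormedSpace ℝ Y]
    (n : ℕ) (x : ℝ → Y) : ℝ → Y := fun t =>
  ∑ j ∈ Finset.Ico 1 (2 ^ n : ℕ),
    Set.indicator (Set.Ioc ((j : ℝ) / 2 ^ n) (((j : ℝ) + 1) / 2 ^ n))
      (fun _ => (2 ^ n : ℝ) • ∫ r in Set.Ioc (((j : ℝ) - 1) / 2 ^ n) ((j : ℝ) / 2 ^ n), x r) t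

/-- The `p`-th power of the Gagliardo (fractional Sobolev) seminorm of order `α` on `[0,1]`:
`[x]_{W^α_p}^p = ∫₀¹∫₀¹ ‖x t - x s‖^p / |t-s|^{1+αp} ds dt`. -/
noncomputable def gagliardoP {Y : Type*} [NormedAddCommGroup Y]
    (p α : ℝ) (x : ℝ → Y) : ℝ≥0∞ :=
  ∫⁻ t in Set.Ioc (0 : ℝ) 1, ∫⁻ s in Set.Ioc (0 : ℝ) 1,
    ENNReal.ofReal (‖x t - x s‖ ^ p / |t - s| ^ (1 + α * p))

/-- The fractional Sobolev norm `‖x‖_{W^α_p([0,1];Y)} = (‖x‖_{L^p}^p + [x]_{W^α_p}^p)^{1/p}`. -/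
noncomputable def sobolevNorm {Y : Type*} [NormedAddCommGroup Y]
    (p α : ℝ) (x : ℝ → Y) : ℝ≥0∞ :=
  (eLpNorm x (ENNReal.ofReal p) (volume.restrict (Set.Ioc (0 : ℝ) 1)) ^ p
    + gagliardoP p α x) ^ (1 / p)

/-!
On a dyadic block `(j 2⁻ⁿ, (j+1) 2⁻ⁿ]` with `j ≥ 1` the projection is the mean of `x` over the
preceding block, so by Jensen's inequality and `|t - s| ≤ 2·2⁻ⁿ` the `p`-th power of
`‖𝔥ⁿ_s x - x‖` on that block is at most `2^{1+αp} 2^{-nαp}` times the part of the Gagliardo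
integral with `t` in the block. On the first block `(0, δ]`, `δ = 2⁻ⁿ`, the projection vanishes
and a Hardy-type bound `‖x‖_{L^p(0,δ)} ≲ δ^α ‖x‖_{W^α_p}` is needed: the means `m_k` of `x` over
`(0, 2⁻ᵏ]` satisfy `‖m_{k+1} - m_k‖ ≲ 2^{k(1-αp)/p} [x]_{W^α_p}`, hence by a geometric sum
`‖m_n‖ ≲ ‖x‖_{L^p} + 2^{n(1-αp)/p} [x]_{W^α_p}`, and `δ^{1/p} ‖m_n‖ ≲ δ^α ‖x‖_{W^α_p}` because
`αp < 1`; the remainder `x - m_n` on `(0, δ]` obeys the fractional Poincaré inequality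
`‖x - m_n‖_{L^p(0,δ)} ≤ δ^α [x]_{W^α_p}`, proved like the bound on the other blocks.
-/

lemma ENNReal.le_ofReal_rpow_inv_mul_of_rpow_le {u B : ℝ≥0∞} {c p : ℝ} (hp : 0 < p) (hc : 0 ≤ c)
    (h : u ^ p ≤ ENNReal.ofReal c * B) : u ≤ ENNReal.ofReal (c ^ p⁻¹) * B ^ p⁻¹ := by
  rwa [← ENNReal.ofReal_rpow_of_nonneg hc (inv_nonneg.2 hp.le),
    ← ENNReal.mul_rpow_of_nonneg _ _ (inv_nonneg.2 hp.le), ENNReal.le_rpow_inv_iff hp]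

lemma one_div_two_pow_le_one (n : ℕ) : (1 : ℝ) / 2 ^ n ≤ 1 :=
  div_le_one_of_le₀ (one_le_pow₀ one_le_two) (by positivity)

lemma one_div_two_pow_rpow (n : ℕ) (γ : ℝ) : ((1 : ℝ) / 2 ^ n) ^ γ = 2 ^ (-(n : ℝ) * γ) := by
  rw [one_div, ← Real.rpow_natCast, ← Real.rpow_neg zero_le_two, ← Real.rpow_mul zero_le_two]

section Lp

variable {X E : Type*} [MeasurableSpace X] [NormedAddCommGroup E] {μ ν : Measure X} {p : ℝ}

lemma eLpNorm_ofReal_rpow (f : X → E) (hp : 0 < p) :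
    eLpNorm f (ENNReal.ofReal p) μ ^ p = ∫⁻ a, ‖f a‖ₑ ^ p ∂μ := by
  have h := eLpNorm_nnreal_pow_eq_lintegral (μ := μ) (f := f) (p := p.toNNReal) (by simpa using hp)
  rwa [Real.coe_toNNReal _ hp.le] at h

lemma eLpNorm_add_measure_le (f : X → E) (hp : 1 ≤ p) :
    eLpNorm f (ENNReal.ofReal p) (μ + ν)
      ≤ eLpNorm f (ENNReal.ofReal p) μ + eLpNorm f (ENNReal.ofReal p) ν := by
  have hp0 : 0 < p := one_pos.trans_le hp
  rw [← ENNReal.rpow_le_rpow_iff hp0, eLpNorm_ofReal_rpow f hp0, lintegral_add_measure,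
    ← eLpNorm_ofReal_rpow f hp0, ← eLpNorm_ofReal_rpow f hp0]
  exact ENNReal.add_rpow_le_rpow_add _ _ hp

lemma enorm_integral_rpow_le [NormedSpace ℝ E] [IsProbabilityMeasure μ] {f : X → E}
    (hf : AEStronglyMeasurable f μ) (hp : 1 ≤ p) :
    ‖∫ a, f a ∂μ‖ₑ ^ p ≤ ∫⁻ a, ‖f a‖ₑ ^ p ∂μ := by
  have hp0 : 0 < p := one_pos.trans_le hp
  calc ‖∫ a, f a ∂μ‖ₑ ^ p ≤ eLpNorm f 1 μ ^ p := by
        rw [eLpNorm_one_eq_lintegral_enorm]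
        gcongr
        exact enorm_integral_le_lintegral_enorm f
    _ ≤ eLpNorm f (ENNReal.ofReal p) μ ^ p := by
        gcongr
        exact eLpNorm_le_eLpNorm_of_exponent_le (by simpa using hp) hf
    _ = ∫⁻ a, ‖f a‖ₑ ^ p ∂μ := eLpNorm_ofReal_rpow f hp0

lemma enorm_setAverage_sub_rpow_le [NormedSpace ℝ E] [CompleteSpace E] {s : Set X}
    (hs₀ : μ s ≠ 0) (hs : μ s ≠ ∞) {f : X → E} (hf : IntegrableOn f s μ) (y : E) (hp : 1 ≤ p) :
    ‖(⨍ a in s, f a ∂μ) - y‖ₑ ^ p ≤ (μ s)⁻¹ * ∫⁻ a in s, ‖f a - y‖ₑ ^ p ∂μ := by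
  set ν := (μ s)⁻¹ • μ.restrict s
  have : IsProbabilityMeasure ν := ⟨by simp [ν, ENNReal.inv_mul_cancel hs₀ hs]⟩
  have hfν : Integrable f ν := hf.smul_measure (ENNReal.inv_ne_top.2 hs₀)
  have hmean : (⨍ a in s, f a ∂μ) - y = ∫ a, (f a - y) ∂ν := by
    rw [setAverage_eq', integral_sub hfν (integrable_const y), integral_const, probReal_univ,
      one_smul]
  rw [hmean, ← smul_eq_mul, ← lintegral_smul_measure]
  exact enorm_integral_rpow_le (hfν.sub (integrable_const y)).aestronglyMeasurable hp

lemma eLpNorm_le_eLpNorm_sub_add_const {f : X → E} (hf : AEStronglyMeasurable f μ) (c : E)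
    (hp : 1 ≤ p) :
    eLpNorm f (ENNReal.ofReal p) μ
      ≤ eLpNorm (fun a ↦ f a - c) (ENNReal.ofReal p) μ + ‖c‖ₑ * μ univ ^ p⁻¹ := by
  have hp0 : 0 < p := one_pos.trans_le hp
  have h := eLpNorm_add_le (p := ENNReal.ofReal p) (f := fun a ↦ f a - c) (g := fun _ ↦ c)
    (hf.sub aestronglyMeasurable_const) aestronglyMeasurable_const (by simpa using hp)
  rwa [eLpNorm_const' c (by simpa using hp0) ENNReal.ofReal_ne_top, ENNReal.toReal_ofReal hp0.le,
    one_div, show (fun a ↦ f a - c) + (fun _ ↦ c) = f by ext; simp] at h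

end Lp

lemma enorm_le_add_of_enorm_sub_le_geometric {E : Type*} [NormedAddCommGroup E] {v : ℕ → E}
    {a g : ℝ≥0∞} {b r : ℝ} (hb : 0 ≤ b) (hr : 1 < r) (h0 : ‖v 0‖ₑ ≤ a)
    (hstep : ∀ k, ‖v (k + 1) - v k‖ₑ ≤ ENNReal.ofReal (b * r ^ k) * g) (n : ℕ) :
    ‖v n‖ₑ ≤ a + ENNReal.ofReal (b / (r - 1) * r ^ n) * g := by
  have hr0 : 0 < r - 1 := sub_pos.2 hr
  induction n with
  | zero => exact h0.trans le_self_add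
  | succ n ih =>
    calc ‖v (n + 1)‖ₑ ≤ ‖v n‖ₑ + ‖v (n + 1) - v n‖ₑ := by
          simpa using enorm_add_le (v n) (v (n + 1) - v n)
      _ ≤ a + ENNReal.ofReal (b / (r - 1) * r ^ n) * g + ENNReal.ofReal (b * r ^ n) * g :=
          add_le_add ih (hstep n)
      _ = a + ENNReal.ofReal (b / (r - 1) * r ^ (n + 1)) * g := by
          rw [add_assoc, ← add_mul, ← ENNReal.ofReal_add (by positivity) (by positivity)]
          congr 3
          field_simp
          ring

lemma lintegral_Ioc_eq_sum_of_monotone {g : ℕ → ℝ} (hg : Monotone g) (f : ℝ → ℝ≥0∞) (m k : ℕ) :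
    ∫⁻ t in Ioc (g m) (g k), f t = ∑ j ∈ Finset.Ico m k, ∫⁻ t in Ioc (g j) (g (j + 1)), f t := by
  rw [← hg.biUnion_Ico_Ioc_map_succ m k, ← Finset.coe_Ico, Finset.set_biUnion_coe,
    lintegral_biUnion_finset (hg.pairwise_disjoint_on_Ioc_succ.set_pairwise _)
      fun _ _ ↦ measurableSet_Ioc]
  rfl

lemma monotone_natCast_div_two_pow (n : ℕ) : Monotone fun j : ℕ ↦ (j : ℝ) / 2 ^ n :=
  fun _ _ h ↦ div_le_div_of_nonneg_right (Nat.cast_le.2 h) (by positivity)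

section Gagliardo

variable {Y : Type*} [NormedAddCommGroup Y] {p α : ℝ} {x : ℝ → Y}

noncomputable def gagliardoInner (p α : ℝ) (x : ℝ → Y) (t : ℝ) : ℝ≥0∞ :=
  ∫⁻ s in Ioc (0 : ℝ) 1, ENNReal.ofReal (‖x t - x s‖ ^ p / |t - s| ^ (1 + α * p))

lemma setLIntegral_gagliardoInner_le {T : Set ℝ} (hT : T ⊆ Ioc 0 1) :
    ∫⁻ t in T, gagliardoInner p α x t ≤ gagliardoP p α x :=
  lintegral_mono_set hT

lemma eLpNorm_le_sobolevNorm (hp : 0 < p) :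
    eLpNorm x (ENNReal.ofReal p) (volume.restrict (Ioc (0 : ℝ) 1)) ≤ sobolevNorm p α x := by
  rw [sobolevNorm, one_div, ENNReal.le_rpow_inv_iff hp]
  exact le_self_add

lemma gagliardoP_rpow_inv_le_sobolevNorm (hp : 0 < p) :
    gagliardoP p α x ^ p⁻¹ ≤ sobolevNorm p α x := by
  rw [sobolevNorm, one_div]
  gcongr
  exact le_add_self

lemma enorm_sub_rpow_le_mul_gagliardo_kernel (hp : 0 ≤ p) (hβ : 0 ≤ 1 + α * p) {s t c : ℝ}
    (hst : s ≠ t) (hc : |t - s| ≤ c) :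
    ‖x s - x t‖ₑ ^ p ≤ ENNReal.ofReal (c ^ (1 + α * p))
      * ENNReal.ofReal (‖x t - x s‖ ^ p / |t - s| ^ (1 + α * p)) := by
  have hd : 0 < |t - s| := abs_pos.2 (sub_ne_zero.2 hst.symm)
  rw [enorm_sub_rev, ← ofReal_norm, ENNReal.ofReal_rpow_of_nonneg (norm_nonneg _) hp,
    ← ENNReal.ofReal_mul (Real.rpow_nonneg (hd.le.trans hc) _)]
  apply ENNReal.ofReal_le_ofReal
  calc ‖x t - x s‖ ^ p = |t - s| ^ (1 + α * p) * (‖x t - x s‖ ^ p / |t - s| ^ (1 + α * p)) :=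
        (mul_div_cancel₀ _ (Real.rpow_pos_of_pos hd _).ne').symm
    _ ≤ c ^ (1 + α * p) * (‖x t - x s‖ ^ p / |t - s| ^ (1 + α * p)) := by gcongr

variable [NormedSpace ℝ Y] [CompleteSpace Y]

lemma enorm_setAverage_sub_rpow_le_gagliardoInner (hp : 1 ≤ p) (hβ : 0 ≤ 1 + α * p)
    (hx : IntegrableOn x (Ioc 0 1)) {a b κ t : ℝ} (hab : a < b) (hI : Ioc a b ⊆ Ioc 0 1)
    (ht : ∀ s ∈ Ioc a b, |t - s| ≤ κ * (b - a)) :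
    ‖(⨍ s in Ioc a b, x s) - x t‖ₑ ^ p
      ≤ ENNReal.ofReal (κ ^ (1 + α * p) * (b - a) ^ (α * p)) * gagliardoInner p α x t := by
  have hba : 0 < b - a := sub_pos.2 hab
  have hκ : 0 ≤ κ := nonneg_of_mul_nonneg_left ((abs_nonneg _).trans (ht b ⟨hab, le_rfl⟩)) hba
  have hvol : volume (Ioc a b) = ENNReal.ofReal (b - a) := Real.volume_Ioc
  calc ‖(⨍ s in Ioc a b, x s) - x t‖ₑ ^ p
      ≤ (ENNReal.ofReal (b - a))⁻¹ * ∫⁻ s in Ioc a b, ‖x s - x t‖ₑ ^ p := by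
        rw [← hvol]
        exact enorm_setAverage_sub_rpow_le (by simp [hvol, hab]) measure_Ioc_lt_top.ne
          (hx.mono_set hI) (x t) hp
    _ ≤ (ENNReal.ofReal (b - a))⁻¹ * ∫⁻ s in Ioc a b, ENNReal.ofReal ((κ * (b - a)) ^ (1 + α * p))
          * ENNReal.ofReal (‖x t - x s‖ ^ p / |t - s| ^ (1 + α * p)) := by
        gcongr 1
        refine lintegral_mono_ae ?_
        filter_upwards [ae_restrict_mem measurableSet_Ioc, ae_restrict_of_ae (Measure.ae_ne _ t)]
          with s hs hst
        exact enorm_sub_rpow_le_mul_gagliardo_kernel (by linarith) hβ hst (ht s hs)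
    _ ≤ (ENNReal.ofReal (b - a))⁻¹
          * (ENNReal.ofReal ((κ * (b - a)) ^ (1 + α * p)) * gagliardoInner p α x t) := by
        rw [lintegral_const_mul' _ _ ENNReal.ofReal_ne_top]
        gcongr
        exact lintegral_mono_set hI
    _ = ENNReal.ofReal (κ ^ (1 + α * p) * (b - a) ^ (α * p)) * gagliardoInner p α x t := by
        rw [← mul_assoc, ← ENNReal.ofReal_inv_of_pos hba, ← ENNReal.ofReal_mul (by positivity),
          Real.mul_rpow hκ hba.le, Real.rpow_add hba, Real.rpow_one]
        field_simp

lemma setLIntegral_enorm_setAverage_sub_rpow_le (hp : 1 ≤ p) (hβ : 0 ≤ 1 + α * p)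
    (hx : IntegrableOn x (Ioc 0 1)) {a b κ : ℝ} (hab : a < b) (hI : Ioc a b ⊆ Ioc 0 1)
    {T : Set ℝ} (hT : MeasurableSet T) (hdist : ∀ t ∈ T, ∀ s ∈ Ioc a b, |t - s| ≤ κ * (b - a)) :
    ∫⁻ t in T, ‖(⨍ s in Ioc a b, x s) - x t‖ₑ ^ p
      ≤ ENNReal.ofReal (κ ^ (1 + α * p) * (b - a) ^ (α * p))
        * ∫⁻ t in T, gagliardoInner p α x t := by
  rw [← lintegral_const_mul' _ _ ENNReal.ofReal_ne_top]
  exact setLIntegral_mono' hT fun t ht ↦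
    enorm_setAverage_sub_rpow_le_gagliardoInner hp hβ hx hab hI (hdist t ht)

lemma setLIntegral_enorm_sub_setAverage_rpow_le (hp : 1 ≤ p) (hβ : 0 ≤ 1 + α * p)
    (hx : IntegrableOn x (Ioc 0 1)) {a b : ℝ} (hab : a < b) (hI : Ioc a b ⊆ Ioc 0 1) :
    ∫⁻ t in Ioc a b, ‖x t - ⨍ s in Ioc a b, x s‖ₑ ^ p
      ≤ ENNReal.ofReal ((b - a) ^ (α * p)) * gagliardoP p α x := by
  have h := setLIntegral_enorm_setAverage_sub_rpow_le (κ := 1) (T := Ioc a b) hp hβ hx hab hI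
    measurableSet_Ioc
    fun t ht s hs ↦ by rw [abs_le]; constructor <;> linarith [ht.1, ht.2, hs.1, hs.2]
  rw [Real.one_rpow, one_mul] at h
  simp_rw [enorm_sub_rev (x _)]
  exact h.trans (by gcongr; exact setLIntegral_gagliardoInner_le hI)

end Gagliardo

section ShiftedHaar

variable {Y : Type*} [NormedAddCommGroup Y] [NormedSpace ℝ Y] {n : ℕ} {x : ℝ → Y} {t : ℝ}

lemma shiftedHaar_eq_zero_of_le (ht : t ≤ 1 / 2 ^ n) : shiftedHaar n x t = 0 := by
  refine Finset.sum_eq_zero fun j hj ↦ indicator_of_notMem (fun hmem ↦ ?_) _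
  have hj1 : (1 : ℝ) ≤ j := by exact_mod_cast (Finset.mem_Ico.1 hj).1
  have : (1 : ℝ) / 2 ^ n ≤ j / 2 ^ n := by gcongr
  linarith [hmem.1]

lemma shiftedHaar_eq_setAverage {j : ℕ} (hj : j ∈ Finset.Ico 1 (2 ^ n))
    (ht : t ∈ Ioc ((j : ℝ) / 2 ^ n) (((j : ℝ) + 1) / 2 ^ n)) :
    shiftedHaar n x t = ⨍ r in Ioc (((j : ℝ) - 1) / 2 ^ n) ((j : ℝ) / 2 ^ n), x r := by
  have hblock : ∀ k : ℕ, k < j → ((k : ℝ) + 1) / 2 ^ n ≤ j / 2 ^ n := fun k hk ↦ by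
    have : (k : ℝ) + 1 ≤ j := by exact_mod_cast hk
    gcongr
  rw [shiftedHaar, Finset.sum_eq_single_of_mem j hj, indicator_of_mem ht, setAverage_eq,
    Real.volume_real_Ioc_of_le (by gcongr; linarith)]
  · congr 1
    field_simp
    ring
  · refine fun k _ hkj ↦ indicator_of_notMem (fun hmem ↦ ?_) _
    rcases Nat.lt_or_gt_of_ne hkj with h | h
    · linarith [hblock k h, hmem.2, ht.1]
    · have : (j : ℝ) + 1 ≤ k := by exact_mod_cast h
      have : ((j : ℝ) + 1) / 2 ^ n ≤ k / 2 ^ n := by gcongr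
      linarith [hmem.1, ht.2]

end ShiftedHaar

section Estimates

variable {Y : Type*} [NormedAddCommGroup Y] [NormedSpace ℝ Y] [CompleteSpace Y]
  {p α : ℝ} {x : ℝ → Y}

lemma setLIntegral_Ioc_shiftedHaar_sub_rpow_le (hp : 1 ≤ p) (hβ : 0 ≤ 1 + α * p)
    (hx : IntegrableOn x (Ioc 0 1)) {n j : ℕ} (hj : j ∈ Finset.Ico 1 (2 ^ n)) :
    ∫⁻ t in Ioc ((j : ℝ) / 2 ^ n) (((j : ℝ) + 1) / 2 ^ n), ‖shiftedHaar n x t - x t‖ₑ ^ p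
      ≤ ENNReal.ofReal (2 ^ (1 + α * p) * (1 / 2 ^ n) ^ (α * p))
        * ∫⁻ t in Ioc ((j : ℝ) / 2 ^ n) (((j : ℝ) + 1) / 2 ^ n), gagliardoInner p α x t := by
  have hj1 : (1 : ℝ) ≤ j := by exact_mod_cast (Finset.mem_Ico.1 hj).1
  have hj2 : (j : ℝ) + 1 ≤ 2 ^ n := by exact_mod_cast (Finset.mem_Ico.1 hj).2
  have hh : (0 : ℝ) < 1 / 2 ^ n := by positivity
  have hlen : (j : ℝ) / 2 ^ n - ((j : ℝ) - 1) / 2 ^ n = 1 / 2 ^ n := by ring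
  have hnext : ((j : ℝ) + 1) / 2 ^ n = j / 2 ^ n + 1 / 2 ^ n := by ring
  rw [setLIntegral_congr_fun measurableSet_Ioc fun t ht ↦ by rw [shiftedHaar_eq_setAverage hj ht],
    ← hlen]
  refine setLIntegral_enorm_setAverage_sub_rpow_le (a := ((j : ℝ) - 1) / 2 ^ n)
    (b := (j : ℝ) / 2 ^ n) (κ := 2) hp hβ hx (by linarith)
    (Ioc_subset_Ioc (div_nonneg (by linarith) (by positivity)) ?_) measurableSet_Ioc ?_
  · rw [div_le_one (by positivity)]
    linarith
  · intro t ht s hs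
    rw [abs_le]
    constructor <;> linarith [ht.1, ht.2, hs.1, hs.2]

lemma setLIntegral_shiftedHaar_sub_rpow_le (hp : 1 ≤ p) (hβ : 0 ≤ 1 + α * p)
    (hx : IntegrableOn x (Ioc 0 1)) (n : ℕ) :
    ∫⁻ t in Ioc (1 / 2 ^ n) 1, ‖shiftedHaar n x t - x t‖ₑ ^ p
      ≤ ENNReal.ofReal (2 ^ (1 + α * p) * (1 / 2 ^ n) ^ (α * p)) * gagliardoP p α x := by
  have hg := monotone_natCast_div_two_pow n
  have hends :
      Ioc ((1 : ℝ) / 2 ^ n) 1 = Ioc (((1 : ℕ) : ℝ) / 2 ^ n) (((2 ^ n : ℕ) : ℝ) / 2 ^ n) := by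
    push_cast
    rw [div_self (by positivity)]
  calc ∫⁻ t in Ioc (1 / 2 ^ n) 1, ‖shiftedHaar n x t - x t‖ₑ ^ p
      = ∑ j ∈ Finset.Ico 1 (2 ^ n : ℕ),
          ∫⁻ t in Ioc ((j : ℝ) / 2 ^ n) (((j : ℝ) + 1) / 2 ^ n),
            ‖shiftedHaar n x t - x t‖ₑ ^ p := by
        rw [hends, lintegral_Ioc_eq_sum_of_monotone hg]
        push_cast
        rfl
    _ ≤ ∑ j ∈ Finset.Ico 1 (2 ^ n : ℕ), ENNReal.ofReal (2 ^ (1 + α * p) * (1 / 2 ^ n) ^ (α * p))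
          * ∫⁻ t in Ioc ((j : ℝ) / 2 ^ n) (((j : ℝ) + 1) / 2 ^ n), gagliardoInner p α x t :=
        Finset.sum_le_sum fun _ hj ↦ setLIntegral_Ioc_shiftedHaar_sub_rpow_le hp hβ hx hj
    _ = ENNReal.ofReal (2 ^ (1 + α * p) * (1 / 2 ^ n) ^ (α * p))
          * ∫⁻ t in Ioc (1 / 2 ^ n) 1, gagliardoInner p α x t := by
        rw [← Finset.mul_sum, hends, lintegral_Ioc_eq_sum_of_monotone hg]
        push_cast
        rfl
    _ ≤ ENNReal.ofReal (2 ^ (1 + α * p) * (1 / 2 ^ n) ^ (α * p)) * gagliardoP p α x := by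
        gcongr
        exact setLIntegral_gagliardoInner_le (Ioc_subset_Ioc (by positivity) le_rfl)

lemma eLpNorm_shiftedHaar_sub_le (hp : 1 ≤ p) (hα : 0 ≤ α) (hx : IntegrableOn x (Ioc 0 1))
    (n : ℕ) :
    eLpNorm (fun t ↦ shiftedHaar n x t - x t) (ENNReal.ofReal p)
        (volume.restrict (Ioc (1 / 2 ^ n) 1))
      ≤ ENNReal.ofReal (2 ^ ((1 + α * p) / p) * 2 ^ (-(n : ℝ) * α)) * sobolevNorm p α x := by
  have hp0 : 0 < p := one_pos.trans_le hp
  have h := setLIntegral_shiftedHaar_sub_rpow_le (α := α) hp (by positivity) hx n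
  rw [← eLpNorm_ofReal_rpow _ hp0] at h
  refine (ENNReal.le_ofReal_rpow_inv_mul_of_rpow_le hp0 (by positivity) h).trans ?_
  gcongr
  · apply le_of_eq
    rw [one_div_two_pow_rpow, ← Real.rpow_add two_pos, ← Real.rpow_mul zero_le_two,
      ← Real.rpow_add two_pos]
    congr 1
    field_simp
  · exact gagliardoP_rpow_inv_le_sobolevNorm hp0

lemma eLpNorm_sub_setAverage_le (hp : 1 ≤ p) (hα : 0 ≤ α) (hx : IntegrableOn x (Ioc 0 1))
    {a b : ℝ} (hab : a < b) (hI : Ioc a b ⊆ Ioc 0 1) :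
    eLpNorm (fun t ↦ x t - ⨍ s in Ioc a b, x s) (ENNReal.ofReal p) (volume.restrict (Ioc a b))
      ≤ ENNReal.ofReal ((b - a) ^ α) * gagliardoP p α x ^ p⁻¹ := by
  have hp0 : 0 < p := one_pos.trans_le hp
  have h := setLIntegral_enorm_sub_setAverage_rpow_le (α := α) hp (by positivity) hx hab hI
  rw [← eLpNorm_ofReal_rpow _ hp0] at h
  refine (ENNReal.le_ofReal_rpow_inv_mul_of_rpow_le hp0 (by positivity) h).trans_eq ?_
  rw [← Real.rpow_mul (sub_pos.2 hab).le, mul_inv_cancel_right₀ hp0.ne']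

lemma enorm_setAverage_Ioc_zero_succ_sub_le (hp : 1 ≤ p) (hα : 0 ≤ α)
    (hx : IntegrableOn x (Ioc 0 1)) (k : ℕ) :
    ‖(⨍ r in Ioc 0 (1 / 2 ^ (k + 1)), x r) - ⨍ r in Ioc 0 (1 / 2 ^ k), x r‖ₑ
      ≤ ENNReal.ofReal (2 ^ p⁻¹ * (2 ^ ((1 - α * p) / p)) ^ k) * gagliardoP p α x ^ p⁻¹ := by
  have hp0 : 0 < p := one_pos.trans_le hp
  have hδ : (0 : ℝ) < 1 / 2 ^ (k + 1) := by positivity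
  have hhalf : Ioc (0 : ℝ) (1 / 2 ^ (k + 1)) ⊆ Ioc 0 (1 / 2 ^ k) :=
    Ioc_subset_Ioc le_rfl (one_div_pow_le_one_div_pow_of_le one_le_two k.le_succ)
  have hI : Ioc (0 : ℝ) (1 / 2 ^ k) ⊆ Ioc 0 1 := Ioc_subset_Ioc le_rfl (one_div_two_pow_le_one k)
  have hjensen := enorm_setAverage_sub_rpow_le (μ := volume) (s := Ioc 0 (1 / 2 ^ (k + 1)))
    (by simp) measure_Ioc_lt_top.ne (hx.mono_set (hhalf.trans hI))
    (⨍ r in Ioc 0 (1 / 2 ^ k), x r) hp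
  rw [Real.volume_Ioc, sub_zero, ← ENNReal.ofReal_inv_of_pos hδ] at hjensen
  have h : ‖(⨍ r in Ioc 0 (1 / 2 ^ (k + 1)), x r) - ⨍ r in Ioc 0 (1 / 2 ^ k), x r‖ₑ ^ p
      ≤ ENNReal.ofReal ((1 / 2 ^ (k + 1))⁻¹ * (1 / 2 ^ k) ^ (α * p)) * gagliardoP p α x := by
    have hpoinc := setLIntegral_enorm_sub_setAverage_rpow_le (α := α) hp (by positivity) hx
      (by positivity) hI
    rw [sub_zero] at hpoinc
    rw [ENNReal.ofReal_mul (by positivity), mul_assoc]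
    exact hjensen.trans (by gcongr; exact (lintegral_mono_set hhalf).trans hpoinc)
  refine (ENNReal.le_ofReal_rpow_inv_mul_of_rpow_le hp0 (by positivity) h).trans_eq ?_
  congr 2
  rw [one_div_two_pow_rpow, one_div, inv_inv, ← Real.rpow_natCast, ← Real.rpow_natCast,
    ← Real.rpow_add two_pos, ← Real.rpow_mul zero_le_two, ← Real.rpow_mul zero_le_two,
    ← Real.rpow_add two_pos]
  congr 1
  push_cast
  field_simp
  ring

lemma enorm_setAverage_Ioc_zero_dyadic_le (hp : 1 ≤ p) (hα : 0 ≤ α) (hαp : α * p < 1)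
    (hx : IntegrableOn x (Ioc 0 1)) (n : ℕ) :
    ‖⨍ r in Ioc 0 (1 / 2 ^ n), x r‖ₑ
      ≤ sobolevNorm p α x + ENNReal.ofReal
        (2 ^ p⁻¹ / (2 ^ ((1 - α * p) / p) - 1) * (2 ^ ((1 - α * p) / p)) ^ n)
        * sobolevNorm p α x := by
  have hp0 : 0 < p := one_pos.trans_le hp
  refine enorm_le_add_of_enorm_sub_le_geometric (v := fun k ↦ ⨍ r in Ioc 0 (1 / 2 ^ k), x r)
    (by positivity) (Real.one_lt_rpow one_lt_two (div_pos (by linarith) hp0)) ?_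
    (fun k ↦ (enorm_setAverage_Ioc_zero_succ_sub_le hp hα hx k).trans
      (by gcongr; exact gagliardoP_rpow_inv_le_sobolevNorm hp0)) n
  refine le_trans ?_ (eLpNorm_le_sobolevNorm hp0)
  rw [← ENNReal.rpow_le_rpow_iff hp0, eLpNorm_ofReal_rpow _ hp0]
  simpa using enorm_setAverage_sub_rpow_le (μ := volume) (s := Ioc 0 1) (by simp) (by simp) hx 0 hp

lemma exists_eLpNorm_Ioc_zero_dyadic_le (hp : 1 ≤ p) (hα : 0 ≤ α) (hαp : α * p < 1) :
    ∃ K : ℝ, 0 < K ∧ ∀ (n : ℕ) (x : ℝ → Y), IntegrableOn x (Ioc 0 1) →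
      eLpNorm x (ENNReal.ofReal p) (volume.restrict (Ioc 0 (1 / 2 ^ n)))
        ≤ ENNReal.ofReal (K * 2 ^ (-(n : ℝ) * α)) * sobolevNorm p α x := by
  have hp0 : 0 < p := one_pos.trans_le hp
  set r : ℝ := 2 ^ ((1 - α * p) / p)
  have hr : 1 < r := Real.one_lt_rpow one_lt_two (div_pos (by linarith) hp0)
  set A : ℝ := 2 ^ p⁻¹ / (r - 1)
  have hA : 0 < A := div_pos (by positivity) (by linarith)
  refine ⟨A + 2, by positivity, fun n x hx ↦ ?_⟩
  set δ : ℝ := 1 / 2 ^ n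
  set W := sobolevNorm p α x
  have hδ : 0 < δ := by positivity
  have hI : Ioc 0 δ ⊆ Ioc 0 1 := Ioc_subset_Ioc le_rfl (one_div_two_pow_le_one n)
  have hosc := eLpNorm_sub_setAverage_le hp hα hx hδ hI
  rw [sub_zero] at hosc
  have hconst : (volume.restrict (Ioc 0 δ) univ) ^ p⁻¹ = ENNReal.ofReal (δ ^ p⁻¹) := by
    rw [Measure.restrict_apply_univ, Real.volume_Ioc, sub_zero,
      ENNReal.ofReal_rpow_of_nonneg hδ.le (inv_nonneg.2 hp0.le)]
  have hscale : δ ^ p⁻¹ * r ^ n = δ ^ α := by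
    rw [one_div_two_pow_rpow, one_div_two_pow_rpow, ← Real.rpow_natCast,
      ← Real.rpow_mul zero_le_two, ← Real.rpow_add two_pos]
    congr 1
    field_simp
    ring
  have hroot : δ ^ p⁻¹ ≤ δ ^ α :=
    Real.rpow_le_rpow_of_exponent_ge hδ (one_div_two_pow_le_one n)
      (by rw [← one_div, le_div_iff₀ hp0]; linarith)
  calc eLpNorm x (ENNReal.ofReal p) (volume.restrict (Ioc 0 δ))
      ≤ eLpNorm (fun t ↦ x t - ⨍ s in Ioc 0 δ, x s) (ENNReal.ofReal p) (volume.restrict (Ioc 0 δ))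
          + ‖⨍ s in Ioc 0 δ, x s‖ₑ * (volume.restrict (Ioc 0 δ) univ) ^ p⁻¹ :=
        eLpNorm_le_eLpNorm_sub_add_const (hx.mono_set hI).aestronglyMeasurable _ hp
    _ ≤ ENNReal.ofReal (δ ^ α) * W
          + (W + ENNReal.ofReal (A * r ^ n) * W) * ENNReal.ofReal (δ ^ p⁻¹) := by
        rw [hconst]
        gcongr
        · exact hosc.trans (by gcongr; exact gagliardoP_rpow_inv_le_sobolevNorm hp0)
        · exact enorm_setAverage_Ioc_zero_dyadic_le hp hα hαp hx n
    _ = ENNReal.ofReal (δ ^ α + δ ^ p⁻¹ + A * (δ ^ p⁻¹ * r ^ n)) * W := by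
        rw [ENNReal.ofReal_add (by positivity) (by positivity),
          ENNReal.ofReal_add (by positivity) (by positivity),
          ENNReal.ofReal_mul hA.le, ENNReal.ofReal_mul hA.le,
          ENNReal.ofReal_mul (by positivity : (0 : ℝ) ≤ δ ^ p⁻¹)]
        ring
    _ ≤ ENNReal.ofReal ((A + 2) * 2 ^ (-(n : ℝ) * α)) * W := by
        rw [hscale, ← one_div_two_pow_rpow]
        gcongr
        linarith

end Estimates

/-- Convergence rate of the shifted Haar projection in fractional Sobolev spaces:
there is a constant `C > 0`, depending only on `p` and `α`, such that
`‖𝔥ⁿ_s(x) − x‖_{L^p} ≤ C · 2^{−nα} · ‖x‖_{W^α_p}`. -/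
theorem shiftedHaar_convergence_rate
    {Y : Type*} [NormedAddCommGroup Y] [NormedSpace ℝ Y] [CompleteSpace Y]
    (p α : ℝ) (hp : 1 < p) (hα : α ∈ Set.Ioc (0 : ℝ) 1) (hαp : α * p < 1) :
    ∃ C : ℝ, 0 < C ∧ ∀ (n : ℕ) (x : ℝ → Y),
      MemLp x (ENNReal.ofReal p) (volume.restrict (Set.Ioc (0 : ℝ) 1)) →
      sobolevNorm p α x ≠ ⊤ →
      eLpNorm (fun t => shiftedHaar n x t - x t) (ENNReal.ofReal p)
          (volume.restrict (Set.Ioc (0 : ℝ) 1))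
        ≤ ENNReal.ofReal (C * (2 : ℝ) ^ (-(n : ℝ) * α)) * sobolevNorm p α x := by
  obtain ⟨K, hK, hnear⟩ := exists_eLpNorm_Ioc_zero_dyadic_le (Y := Y) hp.le hα.1.le hαp
  refine ⟨K + 2 ^ ((1 + α * p) / p), by positivity, fun n x hx _ ↦ ?_⟩
  have hxi : IntegrableOn x (Ioc 0 1) := hx.integrable (by simpa using hp.le)
  have hsplit : volume.restrict (Ioc (0 : ℝ) 1)
      = volume.restrict (Ioc 0 (1 / 2 ^ n)) + volume.restrict (Ioc (1 / 2 ^ n) 1) := by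
    rw [← Measure.restrict_union (Ioc_disjoint_Ioc_of_le le_rfl) measurableSet_Ioc,
      Ioc_union_Ioc_eq_Ioc (by positivity) (one_div_two_pow_le_one n)]
  have hfirst : eLpNorm (fun t ↦ shiftedHaar n x t - x t) (ENNReal.ofReal p)
      (volume.restrict (Ioc 0 (1 / 2 ^ n))) = eLpNorm x (ENNReal.ofReal p)
      (volume.restrict (Ioc 0 (1 / 2 ^ n))) := by
    rw [← eLpNorm_neg]
    refine eLpNorm_congr_ae ?_
    filter_upwards [ae_restrict_mem measurableSet_Ioc] with t ht
    simp [shiftedHaar_eq_zero_of_le ht.2]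
  calc eLpNorm (fun t ↦ shiftedHaar n x t - x t) (ENNReal.ofReal p) (volume.restrict (Ioc 0 1))
      ≤ eLpNorm x (ENNReal.ofReal p) (volume.restrict (Ioc 0 (1 / 2 ^ n)))
        + eLpNorm (fun t ↦ shiftedHaar n x t - x t) (ENNReal.ofReal p)
          (volume.restrict (Ioc (1 / 2 ^ n) 1)) := by
        rw [hsplit, ← hfirst]
        exact eLpNorm_add_measure_le _ hp.le
    _ ≤ ENNReal.ofReal (K * 2 ^ (-(n : ℝ) * α)) * sobolevNorm p α x
        + ENNReal.ofReal (2 ^ ((1 + α * p) / p) * 2 ^ (-(n : ℝ) * α)) * sobolevNorm p α x :=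
      add_le_add (hnear n x hxi) (eLpNorm_shiftedHaar_sub_le hp.le hα.1.le hxi n)
    _ = ENNReal.ofReal ((K + 2 ^ ((1 + α * p) / p)) * 2 ^ (-(n : ℝ) * α)) * sobolevNorm p α x := by
      rw [← add_mul, ← ENNReal.ofReal_add (by positivity) (by positivity), add_mul]
end

section
/- Let Y be a Banach space, 1 < p < ∞, let 𝕏 be a Banach space and ι : 𝕏 → L^p([0,1];Y) a continuous linear map that is compact (i.e., ι maps bounded subsets of 𝕏 to relatively compact subsets of L^p([0,1];Y)). Let 𝒳 ⊆ 𝕏 be a bounded set. Then for every ε > 0 there exists N ∈ ℕ such that for all n ≥ N, sup_{x ∈ 𝒳} ‖𝔥ⁿ_s(ιx) − ιx‖_{L^p([0,1];Y)} ≤ ε. -/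
/-! Each `𝔥ⁿ_s` is a contraction of `L^p(0,1]`: its value on a dyadic interval is the mean of `x`
over an interval of the same length, and Jensen's inequality bounds the `p`-th power of that mean
by the mean of `‖x‖^p`. For a bounded continuous `x` the projections converge pointwise and
boundedly, hence in `L^p`; since `‖𝔥ⁿ_s x - x‖ ≤ ‖𝔥ⁿ_s y - y‖ + 2‖x - y‖`, convergence passes to
all of `L^p` by density, and becomes uniform on the totally bounded set `ι(𝒳)`. -/

open MeasureTheory Set Filter
open scoped ENNReal NNReal

open Function
open scoped Topology BoundedContinuousFunction

section
variable {ι α M N : Type*} [AddCommMonoid M] [AddCommMonoid N] {s : Finset ι} {S : ι → Set α}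

theorem Finset.sum_indicator_apply_of_mem (hS : (s : Set ι).PairwiseDisjoint S) (f : ι → α → M)
    {i : ι} (hi : i ∈ s) {t : α} (ht : t ∈ S i) :
    ∑ j ∈ s, (S j).indicator (f j) t = f i t := by
  rw [Finset.sum_eq_single_of_mem i hi fun j hj hji =>
    indicator_of_notMem (fun htj => hji (hS.elim_set hj hi t htj ht)) _, indicator_of_mem ht]

theorem Finset.apply_sum_indicator_const (hS : (s : Set ι).PairwiseDisjoint S) (c : ι → M)
    {g : M → N} (hg : g 0 = 0) (t : α) :
    g (∑ i ∈ s, (S i).indicator (fun _ => c i) t) =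
      ∑ i ∈ s, (S i).indicator (fun _ => g (c i)) t := by
  by_cases h : ∃ i ∈ s, t ∈ S i
  · obtain ⟨i, hi, ht⟩ := h
    rw [sum_indicator_apply_of_mem hS _ hi ht, sum_indicator_apply_of_mem hS _ hi ht]
  · push Not at h
    simp only [Finset.sum_eq_zero fun i hi => indicator_of_notMem (h i hi) _, hg]
end

theorem enorm_average_rpow_le_laverage {α E : Type*} [MeasurableSpace α] [NormedAddCommGroup E]
    [NormedSpace ℝ E] {μ : Measure α} [IsFiniteMeasure μ] {f : α → E}
    (hf : AEStronglyMeasurable f μ) {q : ℝ} (hq : 1 ≤ q) :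
    ‖⨍ x, f x ∂μ‖ₑ ^ q ≤ ⨍⁻ x, ‖f x‖ₑ ^ q ∂μ := by
  rcases eq_zero_or_neZero μ with rfl | _
  · simp [ENNReal.zero_rpow_of_pos (zero_lt_one.trans_le hq)]
  rw [average_eq', laverage_eq', lintegral_rpow_enorm_eq_rpow_eLpNorm' (by positivity)]
  gcongr
  calc ‖∫ x, f x ∂(μ univ)⁻¹ • μ‖ₑ ≤ ∫⁻ x, ‖f x‖ₑ ∂(μ univ)⁻¹ • μ :=
        enorm_integral_le_lintegral_enorm _
    _ = eLpNorm' f 1 ((μ univ)⁻¹ • μ) := by simp [eLpNorm']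
    _ ≤ eLpNorm' f q ((μ univ)⁻¹ • μ) :=
      eLpNorm'_le_eLpNorm'_of_exponent_le one_pos hq _ (hf.smul_measure _)

theorem tendsto_eLpNorm_of_tendsto_of_norm_le {α E : Type*} [MeasurableSpace α]
    [NormedAddCommGroup E] {μ : Measure α} [IsFiniteMeasure μ] {p : ℝ≥0∞} (hp0 : p ≠ 0)
    (hp : p ≠ ∞) {F : ℕ → α → E} (hF : ∀ n, AEStronglyMeasurable (F n) μ) {C : ℝ}
    (hFC : ∀ n, ∀ᵐ x ∂μ, ‖F n x‖ ≤ C) (hlim : ∀ᵐ x ∂μ, Tendsto (F · x) atTop (𝓝 0)) :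
    Tendsto (fun n => eLpNorm (F n) p μ) atTop (𝓝 0) := by
  simp_rw [eLpNorm_eq_lintegral_rpow_enorm_toReal hp0 hp]
  set q := p.toReal
  have hq : 0 < q := ENNReal.toReal_pos hp0 hp
  have hint : Tendsto (fun n => ∫⁻ x, ‖F n x‖ₑ ^ q ∂μ) atTop (𝓝 0) := by
    simpa [ENNReal.zero_rpow_of_pos hq] using tendsto_lintegral_of_dominated_convergence'
      (fun _ => ENNReal.ofReal C ^ q) (fun n => (hF n).enorm.pow_const q)
      (fun n => (hFC n).mono fun x hx => ENNReal.rpow_le_rpow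
        (by rw [← ofReal_norm]; exact ENNReal.ofReal_le_ofReal hx) hq.le)
      (by simp [lintegral_const, ENNReal.mul_eq_top, ENNReal.rpow_eq_top_iff, hq.le])
      (hlim.mono fun x hx => (ENNReal.continuous_rpow_const (y := q) |>.tendsto _).comp
        (continuous_enorm.tendsto _ |>.comp hx))
  have := (ENNReal.continuous_rpow_const (y := 1 / q) |>.tendsto _).comp hint
  rwa [ENNReal.zero_rpow_of_pos (by positivity)] at this

theorem TotallyBounded.eventually_forall_le_of_tendsto {X ι : Type*} [PseudoEMetricSpace X]
    {K : Set X} (hK : TotallyBounded K) {l : Filter ι} {F : ι → X → ℝ≥0∞} {C : ℝ≥0∞}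
    (hC : C ≠ ∞) (hF : ∀ i x y, F i x ≤ F i y + C * edist x y)
    (hlim : ∀ x, Tendsto (F · x) l (𝓝 0)) {ε : ℝ≥0∞} (hε : 0 < ε) :
    ∀ᶠ i in l, ∀ x ∈ K, F i x ≤ ε := by
  obtain ⟨T, hT, hKT⟩ := EMetric.totallyBounded_iff.1 hK (ε / 2 / C)
    (ENNReal.div_pos (by simp [hε.ne']) hC)
  have hnet : ∀ᶠ i in l, ∀ y ∈ T, F i y ≤ ε / 2 := (eventually_all_finite hT).2 fun y _ =>
    ENNReal.tendsto_nhds_zero.1 (hlim y) _ (by simp [hε.ne'])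
  filter_upwards [hnet] with i hi x hx
  obtain ⟨y, hyT, hxy⟩ := mem_iUnion₂.1 (hKT hx)
  calc F i x ≤ F i y + C * edist x y := hF i x y
    _ ≤ ε / 2 + ε / 2 := by
      gcongr
      · exact hi y hyT
      · rw [mul_comm]; exact (ENNReal.mul_lt_of_lt_div hxy).le
    _ = ε := ENNReal.add_halves ε

section Dyadic
variable {n : ℕ}

theorem Ioc_sub_one_div_two_pow_subset_Ioc {j : ℕ} (hj : j ∈ Finset.Ico 1 (2 ^ n : ℕ)) :
    Ioc (((j : ℝ) - 1) / 2 ^ n) ((j : ℝ) / 2 ^ n) ⊆ Ioc 0 1 :=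
  Ioc_subset_Ioc (div_nonneg (by simpa using (Finset.mem_Ico.1 hj).1) (by positivity))
    (div_le_one_of_le₀ (by exact_mod_cast (Finset.mem_Ico.1 hj).2.le) (by positivity))

theorem pairwise_disjoint_Ioc_div_two_pow (n : ℕ) :
    Pairwise (Disjoint on fun j : ℕ => Ioc ((j : ℝ) / 2 ^ n) (((j : ℝ) + 1) / 2 ^ n)) := by
  have hmono : Monotone fun j : ℕ => (j : ℝ) / 2 ^ n := fun i j hij => by simp only; gcongr
  simpa using hmono.pairwise_disjoint_on_Ioc_succ

theorem pairwise_disjoint_Ioc_sub_one_div_two_pow (n : ℕ) :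
    Pairwise (Disjoint on fun j : ℕ => Ioc (((j : ℝ) - 1) / 2 ^ n) ((j : ℝ) / 2 ^ n)) := by
  have hmono : Monotone fun j : ℕ => ((j : ℝ) - 1) / 2 ^ n := fun i j hij => by simp only; gcongr
  simpa using hmono.pairwise_disjoint_on_Ioc_succ

theorem exists_mem_Ioc_div_two_pow {t : ℝ} (ht : t ∈ Ioc (1 / 2 ^ n) 1) :
    ∃ j ∈ Finset.Ico 1 (2 ^ n : ℕ), t ∈ Ioc ((j : ℝ) / 2 ^ n) (((j : ℝ) + 1) / 2 ^ n) := by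
  have h2n : (0 : ℝ) < 2 ^ n := by positivity
  have hlo : 1 < t * 2 ^ n := (div_lt_iff₀ h2n).1 ht.1
  have hhi : t * 2 ^ n ≤ 2 ^ n := by nlinarith [ht.2]
  obtain ⟨j, hj⟩ : ∃ j, ⌈t * 2 ^ n⌉₊ = j + 1 :=
    ⟨⌈t * 2 ^ n⌉₊ - 1, by have : 1 < ⌈t * 2 ^ n⌉₊ := Nat.lt_ceil.2 (by simpa using hlo); omega⟩
  have hceil_lt : (j : ℝ) + 1 < t * 2 ^ n + 1 := by
    exact_mod_cast hj ▸ Nat.ceil_lt_add_one (by positivity)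
  have hle_ceil : t * 2 ^ n ≤ (j : ℝ) + 1 := by exact_mod_cast hj ▸ Nat.le_ceil (t * 2 ^ n)
  refine ⟨j, Finset.mem_Ico.2 ⟨?_, ?_⟩, ?_, ?_⟩
  · have : (0 : ℝ) < j := by linarith
    exact_mod_cast this
  · have : (j : ℝ) + 1 ≤ 2 ^ n := by
      exact_mod_cast hj ▸ Nat.ceil_le.2 (by exact_mod_cast hhi)
    exact_mod_cast this
  · rw [div_lt_iff₀ h2n]; linarith
  · rw [le_div_iff₀ h2n]; linarith

end Dyadic

section ShiftedHaar
variable {Y : Type*} [NormedAddCommGroup Y] [NormedSpace ℝ Y] {n : ℕ} {p : ℝ≥0∞}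

theorem shiftedHaar_eq_sum_indicator_setAverage (n : ℕ) (f : ℝ → Y) :
    shiftedHaar n f = fun t => ∑ j ∈ Finset.Ico 1 (2 ^ n : ℕ),
      (Ioc ((j : ℝ) / 2 ^ n) (((j : ℝ) + 1) / 2 ^ n)).indicator
        (fun _ => ⨍ r in Ioc (((j : ℝ) - 1) / 2 ^ n) ((j : ℝ) / 2 ^ n), f r) t := by
  have hvol (j : ℝ) : (volume.real (Ioc ((j - 1) / 2 ^ n) (j / 2 ^ n)))⁻¹ = 2 ^ n := by
    rw [Real.volume_real_Ioc_of_le (by gcongr; linarith)]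
    field_simp
    ring
  simp only [setAverage_eq, hvol]
  rfl

theorem shiftedHaar_apply_of_mem (f : ℝ → Y) {j : ℕ} (hj : j ∈ Finset.Ico 1 (2 ^ n : ℕ)) {t : ℝ}
    (ht : t ∈ Ioc ((j : ℝ) / 2 ^ n) (((j : ℝ) + 1) / 2 ^ n)) :
    shiftedHaar n f t = ⨍ r in Ioc (((j : ℝ) - 1) / 2 ^ n) ((j : ℝ) / 2 ^ n), f r := by
  rw [shiftedHaar_eq_sum_indicator_setAverage]
  exact Finset.sum_indicator_apply_of_mem
    ((pairwise_disjoint_Ioc_div_two_pow n).set_pairwise _) _ hj ht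

theorem shiftedHaar_apply_of_le (f : ℝ → Y) {t : ℝ} (ht : t ≤ 1 / 2 ^ n) :
    shiftedHaar n f t = 0 := by
  refine Finset.sum_eq_zero fun j hj => indicator_of_notMem (fun htj => ?_) _
  have hj1 : (1 : ℝ) ≤ j := by exact_mod_cast (Finset.mem_Ico.1 hj).1
  have : (1 : ℝ) / 2 ^ n ≤ j / 2 ^ n := by gcongr
  linarith [htj.1]

theorem stronglyMeasurable_shiftedHaar (n : ℕ) (f : ℝ → Y) :
    StronglyMeasurable (shiftedHaar n f) :=
  Finset.stronglyMeasurable_fun_sum _ fun _ _ =>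
    stronglyMeasurable_const.indicator measurableSet_Ioc

theorem shiftedHaar_sub (n : ℕ) {f g : ℝ → Y} (hf : IntegrableOn f (Ioc 0 1))
    (hg : IntegrableOn g (Ioc 0 1)) :
    shiftedHaar n (f - g) = shiftedHaar n f - shiftedHaar n g := by
  ext t
  simp only [shiftedHaar, Pi.sub_apply, ← Finset.sum_sub_distrib]
  refine Finset.sum_congr rfl fun j hj => ?_
  have hI : Ioc (((j : ℝ) - 1) / 2 ^ n) ((j : ℝ) / 2 ^ n) ⊆ Ioc 0 1 :=
    Ioc_sub_one_div_two_pow_subset_Ioc hj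
  simp only [integral_sub (hf.mono_set hI) (hg.mono_set hI), smul_sub]
  exact congrFun (indicator_sub _ _ _) t

theorem lintegral_enorm_shiftedHaar_rpow_le {f : ℝ → Y}
    (hf : AEStronglyMeasurable f (volume.restrict (Ioc 0 1))) {q : ℝ} (hq : 1 ≤ q) :
    ∫⁻ t in Ioc 0 1, ‖shiftedHaar n f t‖ₑ ^ q ≤ ∫⁻ t in Ioc 0 1, ‖f t‖ₑ ^ q := by
  set s := Finset.Ico 1 (2 ^ n : ℕ)
  set I : ℕ → Set ℝ := fun j => Ioc (((j : ℝ) - 1) / 2 ^ n) ((j : ℝ) / 2 ^ n)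
  set J : ℕ → Set ℝ := fun j => Ioc ((j : ℝ) / 2 ^ n) (((j : ℝ) + 1) / 2 ^ n)
  have hI (j) (hj : j ∈ s) : I j ⊆ Ioc 0 1 :=
    Ioc_sub_one_div_two_pow_subset_Ioc hj
  have hvol (j : ℕ) : volume (J j) = volume (I j) := by
    change volume (Ioc _ _) = volume (Ioc _ _)
    rw [Real.volume_Ioc, Real.volume_Ioc]; congr 1; ring
  have hpt (t : ℝ) : ‖shiftedHaar n f t‖ₑ ^ q =
      ∑ j ∈ s, (J j).indicator (fun _ => ‖⨍ r in I j, f r‖ₑ ^ q) t := by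
    rw [shiftedHaar_eq_sum_indicator_setAverage]
    exact Finset.apply_sum_indicator_const ((pairwise_disjoint_Ioc_div_two_pow n).set_pairwise _)
      _ (g := fun y : Y => ‖y‖ₑ ^ q) (by simp [ENNReal.zero_rpow_of_pos (by positivity)]) t
  calc ∫⁻ t in Ioc 0 1, ‖shiftedHaar n f t‖ₑ ^ q
      ≤ ∫⁻ t, ‖shiftedHaar n f t‖ₑ ^ q := setLIntegral_le_lintegral _ _
    _ = ∑ j ∈ s, ‖⨍ r in I j, f r‖ₑ ^ q * volume (I j) := by
      simp_rw [hpt, ← hvol]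
      rw [lintegral_finsetSum _ fun j _ => measurable_const.indicator measurableSet_Ioc]
      simp only [lintegral_indicator_const measurableSet_Ioc]
      rfl
    _ ≤ ∑ j ∈ s, ∫⁻ t in I j, ‖f t‖ₑ ^ q := by
      refine Finset.sum_le_sum fun j hj => ?_
      rw [← measure_mul_setLAverage _ measure_Ioc_lt_top.ne, mul_comm]
      gcongr
      exact enorm_average_rpow_le_laverage (hf.mono_set (hI j hj)) hq
    _ = ∫⁻ t in ⋃ j ∈ s, I j, ‖f t‖ₑ ^ q :=
      (lintegral_biUnion_finset ((pairwise_disjoint_Ioc_sub_one_div_two_pow n).set_pairwise _)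
        (fun _ _ => measurableSet_Ioc) _).symm
    _ ≤ ∫⁻ t in Ioc 0 1, ‖f t‖ₑ ^ q := lintegral_mono_set (iUnion₂_subset hI)

theorem eLpNorm_shiftedHaar_le (hp1 : 1 ≤ p) (hp : p ≠ ∞) {f : ℝ → Y}
    (hf : AEStronglyMeasurable f (volume.restrict (Ioc 0 1))) :
    eLpNorm (shiftedHaar n f) p (volume.restrict (Ioc 0 1)) ≤
      eLpNorm f p (volume.restrict (Ioc 0 1)) := by
  have hp0 : p ≠ 0 := (zero_lt_one.trans_le hp1).ne'
  rw [eLpNorm_eq_lintegral_rpow_enorm_toReal hp0 hp, eLpNorm_eq_lintegral_rpow_enorm_toReal hp0 hp]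
  refine ENNReal.rpow_le_rpow (lintegral_enorm_shiftedHaar_rpow_le hf ?_) (by positivity)
  simpa using ENNReal.toReal_mono hp hp1

theorem eLpNorm_shiftedHaar_sub_self_le (hp1 : 1 ≤ p) (hp : p ≠ ∞) {f g : ℝ → Y}
    (hf : MemLp f p (volume.restrict (Ioc 0 1))) (hg : MemLp g p (volume.restrict (Ioc 0 1))) :
    eLpNorm (shiftedHaar n f - f) p (volume.restrict (Ioc 0 1)) ≤
      eLpNorm (shiftedHaar n g - g) p (volume.restrict (Ioc 0 1)) +
        2 * eLpNorm (f - g) p (volume.restrict (Ioc 0 1)) := by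
  have hH (h : ℝ → Y) : AEStronglyMeasurable (shiftedHaar n h) (volume.restrict (Ioc 0 1)) :=
    (stronglyMeasurable_shiftedHaar n h).aestronglyMeasurable
  have hsplit : shiftedHaar n f - f = shiftedHaar n (f - g) + (shiftedHaar n g - g) - (f - g) := by
    rw [shiftedHaar_sub n (hf.integrable hp1) (hg.integrable hp1)]
    abel
  rw [hsplit, two_mul]
  calc _ ≤ eLpNorm (shiftedHaar n (f - g)) p (volume.restrict (Ioc 0 1)) +
          eLpNorm (shiftedHaar n g - g) p (volume.restrict (Ioc 0 1)) +
            eLpNorm (f - g) p (volume.restrict (Ioc 0 1)) := by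
        grw [eLpNorm_sub_le ((hH _).add ((hH _).sub hg.1)) (hf.1.sub hg.1) hp1,
          eLpNorm_add_le (hH _) ((hH _).sub hg.1) hp1]
    _ ≤ _ := by
        grw [eLpNorm_shiftedHaar_le hp1 hp (hf.1.sub hg.1)]
        exact le_of_eq (by ring)

variable [CompleteSpace Y]

theorem shiftedHaar_apply_mem {f : ℝ → Y} (hf : IntegrableOn f (Ioc 0 1)) {t : ℝ}
    (ht : t ∈ Ioc (1 / 2 ^ n) 1) {K : Set Y} (hK : Convex ℝ K) (hKc : IsClosed K)
    (hfK : ∀ r ∈ Ioc (t - 2 / 2 ^ n) t, f r ∈ K) : shiftedHaar n f t ∈ K := by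
  obtain ⟨j, hj, htj⟩ := exists_mem_Ioc_div_two_pow ht
  have hIt : Ioc (((j : ℝ) - 1) / 2 ^ n) ((j : ℝ) / 2 ^ n) ⊆ Ioc (t - 2 / 2 ^ n) t :=
    Ioc_subset_Ioc (by linarith [htj.2, show ((j : ℝ) + 1) / 2 ^ n - 2 / 2 ^ n =
      ((j : ℝ) - 1) / 2 ^ n by ring]) htj.1.le
  rw [shiftedHaar_apply_of_mem f hj htj]
  refine hK.set_average_mem hKc ?_ measure_Ioc_lt_top.ne
    (ae_restrict_of_forall_mem measurableSet_Ioc fun r hr => hfK r (hIt hr))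
    (hf.mono_set (Ioc_sub_one_div_two_pow_subset_Ioc hj))
  rw [Real.volume_Ioc, ne_eq, ENNReal.ofReal_eq_zero, not_le, sub_pos]
  gcongr
  linarith

theorem tendsto_shiftedHaar_apply {f : ℝ → Y} (hf : IntegrableOn f (Ioc 0 1)) {t : ℝ}
    (ht : t ∈ Ioc 0 1) (hft : ContinuousWithinAt f (Iic t) t) :
    Tendsto (fun n => shiftedHaar n f t) atTop (𝓝 (f t)) := by
  have hmesh : Tendsto (fun n : ℕ => (2 : ℝ) / 2 ^ n) atTop (𝓝 0) :=
    tendsto_const_nhds.div_atTop (tendsto_pow_atTop_atTop_of_one_lt one_lt_two)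
  rw [Metric.tendsto_nhds]
  intro η hη
  obtain ⟨δ, hδ, hfδ⟩ := Metric.continuousWithinAt_iff.1 hft (η / 2) (half_pos hη)
  filter_upwards [hmesh.eventually_lt_const (lt_min hδ ht.1)] with n hn
  have hn' : 1 / 2 ^ n < t := by
    have : (1 : ℝ) / 2 ^ n < 2 / 2 ^ n := by gcongr; norm_num
    linarith [min_le_right δ t]
  refine (Metric.mem_closedBall.1 (shiftedHaar_apply_mem hf ⟨hn', ht.2⟩ (convex_closedBall _ _)
    Metric.isClosed_closedBall fun r hr => ?_)).trans_lt (half_lt_self hη)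
  refine (hfδ hr.2 ?_).le
  rw [Real.dist_eq, abs_lt]
  constructor <;> linarith [hr.1, hr.2, min_le_left δ t]

theorem tendsto_eLpNorm_shiftedHaar_sub_self_of_boundedContinuous (hp0 : p ≠ 0) (hp : p ≠ ∞)
    (g : ℝ →ᵇ Y) :
    Tendsto (fun n => eLpNorm (shiftedHaar n g - ⇑g) p (volume.restrict (Ioc 0 1))) atTop
      (𝓝 0) := by
  have hg : IntegrableOn g (Ioc 0 1) := g.continuous.integrableOn_Ioc
  have hbound (n : ℕ) (t : ℝ) (ht : t ≤ 1) : ‖shiftedHaar n g t‖ ≤ ‖g‖ := by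
    rcases le_or_gt t (1 / 2 ^ n) with ht' | ht'
    · simp [shiftedHaar_apply_of_le g ht']
    · exact mem_closedBall_zero_iff.1 (shiftedHaar_apply_mem hg ⟨ht', ht⟩ (convex_closedBall _ _)
        Metric.isClosed_closedBall fun r _ => mem_closedBall_zero_iff.2 (g.norm_coe_le_norm r))
  have hmeas (n : ℕ) : AEStronglyMeasurable (shiftedHaar n g - ⇑g) (volume.restrict (Ioc 0 1)) :=
    ((stronglyMeasurable_shiftedHaar n g).sub g.continuous.stronglyMeasurable).aestronglyMeasurable
  refine tendsto_eLpNorm_of_tendsto_of_norm_le hp0 hp hmeas (C := ‖g‖ + ‖g‖) (fun n => ae_restrict_of_forall_mem measurableSet_Ioc fun t ht =>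
      (norm_sub_le _ _).trans (add_le_add (hbound n t ht.2) (g.norm_coe_le_norm t)))
    (ae_restrict_of_forall_mem measurableSet_Ioc fun t ht => ?_)
  simpa using (tendsto_shiftedHaar_apply hg ht g.continuous.continuousWithinAt).sub_const (g t)

theorem tendsto_eLpNorm_shiftedHaar_sub_self (hp1 : 1 ≤ p) (hp : p ≠ ∞) {f : ℝ → Y}
    (hf : MemLp f p (volume.restrict (Ioc 0 1))) :
    Tendsto (fun n => eLpNorm (shiftedHaar n f - f) p (volume.restrict (Ioc 0 1))) atTop (𝓝 0) := by
  rw [ENNReal.tendsto_nhds_zero]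
  intro ε hε
  obtain ⟨g, hfg, hg⟩ := hf.exists_boundedContinuous_eLpNorm_sub_le hp (ε := ε / 2 / 2)
    (by simp [hε.ne'])
  have hg_lim := tendsto_eLpNorm_shiftedHaar_sub_self_of_boundedContinuous
    (zero_lt_one.trans_le hp1).ne' hp g
  filter_upwards [ENNReal.tendsto_nhds_zero.1 hg_lim (ε / 2) (by simp [hε.ne'])] with n hn
  calc _ ≤ _ := eLpNorm_shiftedHaar_sub_self_le hp1 hp hf hg
    _ ≤ ε / 2 + 2 * (ε / 2 / 2) := by gcongr
    _ = ε := by rw [ENNReal.mul_div_cancel two_ne_zero ENNReal.ofNat_ne_top, ENNReal.add_halves]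

end ShiftedHaar

theorem shiftedHaar_uniform_on_bounded_general
    {Y : Type*} [NormedAddCommGroup Y] [NormedSpace ℝ Y] [CompleteSpace Y]
    {𝕏 : Type*} [NormedAddCommGroup 𝕏] [NormedSpace ℝ 𝕏]
    (p : ℝ) [Fact (1 ≤ ENNReal.ofReal p)]
    (ι : 𝕏 →L[ℝ] Lp Y (ENNReal.ofReal p) (volume.restrict (Set.Ioc (0 : ℝ) 1)))
    (hcompact : ∀ s : Set 𝕏, Bornology.IsBounded s → IsCompact (closure (⇑ι '' s)))
    (𝒳 : Set 𝕏) (hbdd : Bornology.IsBounded 𝒳) :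
    ∀ ε > (0 : ℝ), ∃ N : ℕ, ∀ n ≥ N, ∀ x ∈ 𝒳,
      eLpNorm (fun t => shiftedHaar n (⇑(ι x)) t - (ι x : ℝ → Y) t) (ENNReal.ofReal p)
        (volume.restrict (Set.Ioc (0 : ℝ) 1)) ≤ ENNReal.ofReal ε := by
  intro ε hε
  have hp1 : 1 ≤ ENNReal.ofReal p := Fact.out
  have hp : ENNReal.ofReal p ≠ ∞ := ENNReal.ofReal_ne_top
  set F : ℕ → Lp Y (ENNReal.ofReal p) (volume.restrict (Ioc 0 1)) → ℝ≥0∞ := fun n f =>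
    eLpNorm (shiftedHaar n f - ⇑f) (ENNReal.ofReal p) (volume.restrict (Ioc 0 1))
  have hF (n : ℕ) (f g) : F n f ≤ F n g + 2 * edist f g := by
    rw [Lp.edist_def]
    exact eLpNorm_shiftedHaar_sub_self_le hp1 hp (Lp.memLp f) (Lp.memLp g)
  have hlim (f) : Tendsto (F · f) atTop (𝓝 0) :=
    tendsto_eLpNorm_shiftedHaar_sub_self hp1 hp (Lp.memLp f)
  obtain ⟨N, hN⟩ := eventually_atTop.1 <|
    (hcompact 𝒳 hbdd).totallyBounded.eventually_forall_le_of_tendsto ENNReal.ofNat_ne_top hF hlim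
      (ENNReal.ofReal_pos.2 hε)
  exact ⟨N, fun n hn x hx => hN n hn _ (subset_closure (mem_image_of_mem ι hx))⟩

/-- Uniform convergence of the shifted Haar projections on bounded sets mapped by a compact
linear operator `ι : 𝕏 → L^p([0,1];Y)`: for every `ε > 0` there exists `N` such that for all
`n ≥ N` and all `x` in the bounded set `𝒳`, `‖𝔥ⁿ_s(ιx) − ιx‖_{L^p([0,1];Y)} ≤ ε`. -/
theorem shiftedHaar_uniform_on_bounded
    {Y : Type*} [NormedAddCommGroup Y] [NormedSpace ℝ Y] [CompleteSpace Y]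
    {𝕏 : Type*} [NormedAddCommGroup 𝕏] [NormedSpace ℝ 𝕏]
    (p : ℝ) (hp : 1 < p) [Fact (1 ≤ ENNReal.ofReal p)]
    (ι : 𝕏 →L[ℝ] Lp Y (ENNReal.ofReal p) (volume.restrict (Set.Ioc (0 : ℝ) 1)))
    (hcompact : ∀ s : Set 𝕏, Bornology.IsBounded s → IsCompact (closure (⇑ι '' s)))
    (𝒳 : Set 𝕏) (hbdd : Bornology.IsBounded 𝒳) :
    ∀ ε > (0 : ℝ), ∃ N : ℕ, ∀ n ≥ N, ∀ x ∈ 𝒳,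
      eLpNorm (fun t => shiftedHaar n (⇑(ι x)) t - (ι x : ℝ → Y) t) (ENNReal.ofReal p)
        (volume.restrict (Set.Ioc (0 : ℝ) 1)) ≤ ENNReal.ofReal ε :=
  shiftedHaar_uniform_on_bounded_general p ι hcompact 𝒳 hbdd
end

section
/- Let m ≥ 1 be a real number. Then for all a, b ∈ ℝ one has ( |a|^{m−1}a − |b|^{m−1}b ) · (a − b) ≥ 2^{1−m} · |a − b|^{m+1}. -/
private lemma aux_superadd {m x y : ℝ} (hm : 1 ≤ m) (hx : 0 ≤ x) (hy : 0 ≤ y) :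
    x ^ m + y ^ m ≤ (x + y) ^ m := by
  have h := NNReal.add_rpow_le_rpow_add x.toNNReal y.toNNReal hm
  rw [← Real.toNNReal_add hx hy] at h
  have h2 := NNReal.coe_le_coe.2 h
  rwa [NNReal.coe_add, NNReal.coe_rpow, NNReal.coe_rpow, NNReal.coe_rpow,
    Real.coe_toNNReal _ hx, Real.coe_toNNReal _ hy,
    Real.coe_toNNReal _ (add_nonneg hx hy)] at h2

private lemma aux_conv {m x y : ℝ} (hm : 1 ≤ m) (hx : 0 ≤ x) (hy : 0 ≤ y) :
    (2 : ℝ) ^ (1 - m) * (x + y) ^ m ≤ x ^ m + y ^ m := by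
  have h := NNReal.rpow_add_le_mul_rpow_add_rpow x.toNNReal y.toNNReal hm
  have h2 := NNReal.coe_le_coe.2 h
  rw [← Real.toNNReal_add hx hy] at h2
  rw [NNReal.coe_mul, NNReal.coe_add, NNReal.coe_rpow, NNReal.coe_rpow, NNReal.coe_rpow,
    NNReal.coe_rpow, Real.coe_toNNReal _ hx, Real.coe_toNNReal _ hy,
    Real.coe_toNNReal _ (add_nonneg hx hy)] at h2
  have hcoe : ((2 : NNReal) : ℝ) = (2 : ℝ) := by norm_num
  rw [hcoe] at h2
  have hpos : (0 : ℝ) < (2 : ℝ) ^ (1 - m) := Real.rpow_pos_of_pos (by norm_num) _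
  have hmul : (2 : ℝ) ^ (1 - m) * (2 : ℝ) ^ (m - 1) = 1 := by
    rw [← Real.rpow_add (by norm_num : (0:ℝ) < 2)]
    norm_num
  calc (2 : ℝ) ^ (1 - m) * (x + y) ^ m
      ≤ (2 : ℝ) ^ (1 - m) * ((2 : ℝ) ^ (m - 1) * (x ^ m + y ^ m)) := by
        exact mul_le_mul_of_nonneg_left h2 hpos.le
    _ = ((2 : ℝ) ^ (1 - m) * (2 : ℝ) ^ (m - 1)) * (x ^ m + y ^ m) := by ring
    _ = x ^ m + y ^ m := by rw [hmul, one_mul]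

private lemma aux_oddp {m : ℝ} (hm : 1 ≤ m) {x : ℝ} (hx : 0 ≤ x) :
    |x| ^ (m - 1) * x = x ^ m := by
  rcases hx.eq_or_lt with rfl | hx'
  · simp [Real.zero_rpow (by linarith : m ≠ 0)]
  · rw [abs_of_pos hx', ← Real.rpow_add_one hx'.ne', sub_add_cancel]

private lemma aux_key_nonneg {m : ℝ} (hm : 1 ≤ m) {s t : ℝ} (ht : 0 ≤ t) (hst : t ≤ s) :
    (2 : ℝ) ^ (1 - m) * (s - t) ^ m ≤ |s| ^ (m - 1) * s - |t| ^ (m - 1) * t := by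
  rw [aux_oddp hm ht, aux_oddp hm (ht.trans hst)]
  have h1 := aux_superadd hm (sub_nonneg.2 hst) ht
  rw [sub_add_cancel] at h1
  have h2 : (2 : ℝ) ^ (1 - m) ≤ 1 :=
    Real.rpow_le_one_of_one_le_of_nonpos (by norm_num) (by linarith)
  have h3 : (0 : ℝ) ≤ (s - t) ^ m := Real.rpow_nonneg (sub_nonneg.2 hst) _
  nlinarith

private lemma aux_key {m : ℝ} (hm : 1 ≤ m) {s t : ℝ} (hst : t ≤ s) :
    (2 : ℝ) ^ (1 - m) * (s - t) ^ m ≤ |s| ^ (m - 1) * s - |t| ^ (m - 1) * t := by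
  rcases le_total 0 t with ht | ht
  · exact aux_key_nonneg hm ht hst
  rcases le_total s 0 with hs | hs
  · have h := aux_key_nonneg hm (neg_nonneg.2 hs) (neg_le_neg hst)
    rw [show -t - -s = s - t by ring, abs_neg, abs_neg] at h
    linarith
  · -- t ≤ 0 ≤ s
    rw [aux_oddp hm hs, show |t| ^ (m - 1) * t = -(|(-t)| ^ (m - 1) * (-t)) by
      rw [abs_neg]; ring, aux_oddp hm (neg_nonneg.2 ht)]
    have h := aux_conv hm hs (neg_nonneg.2 ht)
    rw [show s + -t = s - t by ring] at h
    linarith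

private lemma aux_main {m : ℝ} (hm : 1 ≤ m) {a b : ℝ} (h : b ≤ a) :
    (2 : ℝ) ^ (1 - m) * |a - b| ^ (m + 1)
      ≤ (|a| ^ (m - 1) * a - |b| ^ (m - 1) * b) * (a - b) := by
  rcases h.eq_or_lt with rfl | h'
  · simp [Real.zero_rpow (by positivity : m + 1 ≠ 0)]
  · have hab : (0 : ℝ) < a - b := sub_pos.2 h'
    rw [abs_of_pos hab, Real.rpow_add_one hab.ne']
    have hkey := aux_key hm h
    calc (2 : ℝ) ^ (1 - m) * ((a - b) ^ m * (a - b))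
        = ((2 : ℝ) ^ (1 - m) * (a - b) ^ m) * (a - b) := by ring
      _ ≤ (|a| ^ (m - 1) * a - |b| ^ (m - 1) * b) * (a - b) :=
          mul_le_mul_of_nonneg_right hkey hab.le

/-- Strong monotonicity of the odd power function `x^{[m]} = |x|^{m-1}x` for `m ≥ 1`:
`(a^{[m]} − b^{[m]})·(a − b) ≥ 2^{1−m}·|a − b|^{m+1}` for all real `a, b`. -/
theorem oddPower_strong_monotonicity (m : ℝ) (hm : 1 ≤ m) (a b : ℝ) :
    (2 : ℝ) ^ (1 - m) * |a - b| ^ (m + 1)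
      ≤ (|a| ^ (m - 1) * a - |b| ^ (m - 1) * b) * (a - b) := by
  rcases le_total b a with h | h
  · exact aux_main hm h
  · rw [abs_sub_comm, show (|a| ^ (m - 1) * a - |b| ^ (m - 1) * b) * (a - b)
      = (|b| ^ (m - 1) * b - |a| ^ (m - 1) * a) * (b - a) by ring]
    exact aux_main hm h
end
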